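/- Let n ≥ 3, and let a₁, a₂ < 0 be real numbers. For λ ∈ (0,1), define f(λ) = min(a₁/λ^{2/n}, a₂/(1-λ)^{2/n}). Then the supremum of f over λ ∈ (0,1) equals -(|a₁|^{n/2} + |a₂|^{n/2})^{2/n}, and it is attained at λ = |a₁|^{n/2}/(|a₁|^{n/2} + |a₂|^{n/2}). -/

import Mathlib

/-- Optimization of the minimum of rescaled Yamabe constants over volume splittings:
for `n ≥ 3` and `a₁, a₂ < 0`, the function
`f λ = min (a₁ / λ^(2/n)) (a₂ / (1-λ)^(2/n))` on `(0,1)` has supremum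
`-(|a₁|^(n/2) + |a₂|^(n/2))^(2/n)`, attained at
`λ₀ = |a₁|^(n/2) / (|a₁|^(n/2) + |a₂|^(n/2))`. -/
theorem stmt0 (n : ℕ) (hn : 3 ≤ n) (a₁ a₂ : ℝ) (h₁ : a₁ < 0) (h₂ : a₂ < 0) :
    let f : ℝ → ℝ := fun l => min (a₁ / l ^ (2 / (n : ℝ))) (a₂ / (1 - l) ^ (2 / (n : ℝ)))
    let l₀ : ℝ := |a₁| ^ ((n : ℝ) / 2) / (|a₁| ^ ((n : ℝ) / 2) + |a₂| ^ ((n : ℝ) / 2))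
    IsGreatest (f '' Set.Ioo (0 : ℝ) 1)
        (-(|a₁| ^ ((n : ℝ) / 2) + |a₂| ^ ((n : ℝ) / 2)) ^ (2 / (n : ℝ))) ∧
    l₀ ∈ Set.Ioo (0 : ℝ) 1 ∧
    f l₀ = -(|a₁| ^ ((n : ℝ) / 2) + |a₂| ^ ((n : ℝ) / 2)) ^ (2 / (n : ℝ)) := by
  intro f l₀
  have hn0 : (0:ℝ) < n := by
    have : 0 < n := lt_of_lt_of_le (by norm_num) hn
    exact_mod_cast this
  set c : ℝ := 2 / (n:ℝ) with hc
  set A : ℝ := |a₁| ^ ((n : ℝ) / 2) with hAdef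
  set B : ℝ := |a₂| ^ ((n : ℝ) / 2) with hBdef
  have ha1 : (0:ℝ) < |a₁| := abs_pos.mpr h₁.ne
  have ha2 : (0:ℝ) < |a₂| := abs_pos.mpr h₂.ne
  have hA : 0 < A := Real.rpow_pos_of_pos ha1 _
  have hB : 0 < B := Real.rpow_pos_of_pos ha2 _
  have hAB : 0 < A + B := by linarith
  have hc0 : 0 < c := by rw [hc]; positivity
  have hmul : ((n:ℝ)/2) * c = 1 := by rw [hc]; field_simp
  have hmul' : c * ((n:ℝ)/2) = 1 := by rw [hc]; field_simp
  have hAc : A ^ c = |a₁| := by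
    rw [hAdef, ← Real.rpow_mul (abs_nonneg a₁), hmul, Real.rpow_one]
  have hBc : B ^ c = |a₂| := by
    rw [hBdef, ← Real.rpow_mul (abs_nonneg a₂), hmul, Real.rpow_one]
  have hl₀ : l₀ = A / (A + B) := rfl
  have hl₀mem : l₀ ∈ Set.Ioo (0:ℝ) 1 := by
    constructor
    · rw [hl₀]; positivity
    · rw [hl₀, div_lt_one hAB]; linarith
  have h1l₀ : 1 - l₀ = B / (A + B) := by
    rw [hl₀]; field_simp; ring
  -- value of f at l₀
  have hval1 : a₁ / l₀ ^ c = -(A + B) ^ c := by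
    rw [hl₀, Real.div_rpow hA.le hAB.le, hAc]
    rw [div_div_eq_mul_div, abs_of_neg h₁, div_neg, mul_comm a₁, mul_div_assoc,
      div_self h₁.ne, mul_one]
  have hval2 : a₂ / (1 - l₀) ^ c = -(A + B) ^ c := by
    rw [h1l₀, Real.div_rpow hB.le hAB.le, hBc]
    rw [div_div_eq_mul_div, abs_of_neg h₂, div_neg, mul_comm a₂, mul_div_assoc,
      div_self h₂.ne, mul_one]
  have hfl₀ : f l₀ = -(A + B) ^ c := by
    show min (a₁ / l₀ ^ c) (a₂ / (1 - l₀) ^ c) = _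
    rw [hval1, hval2, min_self]
  -- upper bound
  have hub : ∀ l ∈ Set.Ioo (0:ℝ) 1, f l ≤ -(A + B) ^ c := by
    rintro l ⟨hl0, hl1⟩
    by_contra h
    push_neg at h
    have hmin := h
    have h1 : -(A + B) ^ c < a₁ / l ^ c := lt_of_lt_of_le hmin (min_le_left _ _)
    have h2 : -(A + B) ^ c < a₂ / (1 - l) ^ c := lt_of_lt_of_le hmin (min_le_right _ _)
    have hlc : 0 < l ^ c := Real.rpow_pos_of_pos hl0 _
    have hl1c : 0 < (1 - l) ^ c := Real.rpow_pos_of_pos (by linarith) _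
    -- from h1 : |a₁| < ((A+B)*l)^c
    have k1 : |a₁| < ((A + B) * l) ^ c := by
      have := (lt_div_iff₀ hlc).mp h1
      rw [Real.mul_rpow hAB.le hl0.le]
      nlinarith [abs_of_neg h₁]
    have k2 : |a₂| < ((A + B) * (1 - l)) ^ c := by
      have := (lt_div_iff₀ hl1c).mp h2
      rw [Real.mul_rpow hAB.le (by linarith : (0:ℝ) ≤ 1 - l)]
      nlinarith [abs_of_neg h₂]
    have K1 : A < (A + B) * l := by
      have := Real.rpow_lt_rpow (abs_nonneg a₁) k1 (by positivity : (0:ℝ) < (n:ℝ)/2)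
      rwa [← Real.rpow_mul (mul_nonneg hAB.le hl0.le), hmul', Real.rpow_one] at this
    have K2 : B < (A + B) * (1 - l) := by
      have := Real.rpow_lt_rpow (abs_nonneg a₂) k2 (by positivity : (0:ℝ) < (n:ℝ)/2)
      rwa [← Real.rpow_mul (mul_nonneg hAB.le (by linarith : (0:ℝ) ≤ 1 - l)), hmul', Real.rpow_one] at this
    have hsum : (A + B) * l + (A + B) * (1 - l) = A + B := by ring
    linarith [add_lt_add K1 K2]
  refine ⟨⟨⟨l₀, hl₀mem, hfl₀⟩, ?_⟩, hl₀mem, hfl₀⟩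
  rintro y ⟨l, hl, rfl⟩
  exact hub l hl
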